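/- Lemma 2 (per-block strong secrecy, conditional form): Fix k ∈ {1,2} with k̄ the other index, and let n be a power of 2. Let p denote the joint law of (A^n, T_{(1)}^n, T_{(2)}^n, Z^n). Write ℱ := H^{(n)}_{V|Z}, 𝒢 := H^{(n)}_{U_k|VZ}, ℬ := H^{(n)}_{U_k̄|V U_k Z}. Let (Ã^n, T̃_{(1)}^n, T̃_{(2)}^n, Z̃^n) be any random tuple taking values in the same spaces (law q̃) such that H_{q̃}( Ã[ℱ], T̃_{(k)}[𝒢], T̃_{(k̄)}[ℬ] | Z̃^n ) ≥ H_p( A[ℱ], T_{(k)}[𝒢], T_{(k̄)}[ℬ] | Z^n ) − ε for some ε ≥ 0. Then the information leaked to the eavesdropper satisfies I_{q̃}( Ã[ℱ], T̃_{(k)}[𝒢], T̃_{(k̄)}[ℬ] ; Z̃^n ) ≤ 3 n δ_n + ε. -/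

import Mathlib

/-!
Write `N = |ℱ| + |𝒢| + |ℬ|`. Under the i.i.d. law, the chain rule splits the conditional entropy of
the secured triple given `Zⁿ` into `N` terms, one per secured polar coordinate, each conditioned on
the coordinates of the triple before it and on `Zⁿ`. All of that is a function of the coordinate's
own prefix and of the side information defining its high-entropy set, so each term is at least
`1 - δₙ`. Hence `H_q̃(triple | Z̃ⁿ) ≥ N (1 - δₙ) - ε`, while `H_q̃(triple) ≤ N` because the triple
consists of `N` bits; subtracting gives `I ≤ N δₙ + ε ≤ 3 n δₙ + ε`.
-/

open scoped BigOperators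

noncomputable section

namespace WTpaper

/-- A probability mass function on a finite type. -/
def IsPMF {Ω : Type*} [Fintype Ω] (μ : Ω → ℝ) : Prop :=
  (∀ ω, 0 ≤ μ ω) ∧ ∑ ω, μ ω = 1

/-- `Finset.filter` over the whole type, with classical decidability. -/
def cfilter {α : Type*} [Fintype α] (p : α → Prop) : Finset α :=
  @Finset.filter α p (Classical.decPred p) Finset.univ

/-- Probability of an event. -/
def prob {Ω : Type*} [Fintype Ω] (μ : Ω → ℝ) (p : Ω → Prop) : ℝ :=
  ∑ ω ∈ cfilter p, μ ω

/-- Probability that a random variable takes a given value. -/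
def probOf {Ω α : Type*} [Fintype Ω] (μ : Ω → ℝ) (X : Ω → α) (x : α) : ℝ :=
  prob μ (fun ω => X ω = x)

/-- Shannon entropy (in bits) of a random variable on a finite probability space. -/
def ent {Ω α : Type*} [Fintype Ω] [Fintype α] (μ : Ω → ℝ) (X : Ω → α) : ℝ :=
  -∑ x : α, probOf μ X x * Real.logb 2 (probOf μ X x)

/-- Conditional Shannon entropy `H(X | Y)` (in bits). -/
def condEnt {Ω α β : Type*} [Fintype Ω] [Fintype α] [Fintype β]
    (μ : Ω → ℝ) (X : Ω → α) (Y : Ω → β) : ℝ :=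
  ent μ (fun ω => (X ω, Y ω)) - ent μ Y

/-- Mutual information `I(X ; Y)` (in bits). -/
def mutInfo {Ω α β : Type*} [Fintype Ω] [Fintype α] [Fintype β]
    (μ : Ω → ℝ) (X : Ω → α) (Y : Ω → β) : ℝ :=
  ent μ X + ent μ Y - ent μ (fun ω => (X ω, Y ω))

/-- Conditional mutual information `I(X ; Y | Z)` (in bits). -/
def condMutInfo {Ω α β γ : Type*} [Fintype Ω] [Fintype α] [Fintype β] [Fintype γ]
    (μ : Ω → ℝ) (X : Ω → α) (Y : Ω → β) (Z : Ω → γ) : ℝ :=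
  condEnt μ X Z - condEnt μ X (fun ω => (Y ω, Z ω))

/-- The Markov chain `A − B − C`: `P(A,B,C) P(B) = P(A,B) P(B,C)`. -/
def MarkovChain {Ω α β γ : Type*} [Fintype Ω] (μ : Ω → ℝ)
    (A : Ω → α) (B : Ω → β) (C : Ω → γ) : Prop :=
  ∀ a b c,
    probOf μ (fun ω => (A ω, B ω, C ω)) (a, b, c) * probOf μ B b =
      probOf μ (fun ω => (A ω, B ω)) (a, b) * probOf μ (fun ω => (B ω, C ω)) (b, c)

/-- `δ_n = 2^{-n^β}`. -/
def deltaN (β : ℝ) (n : ℕ) : ℝ := (2 : ℝ) ^ (-((n : ℝ) ^ β))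

/-- Arıkan's polarization kernel. -/
def g2 : Matrix (Fin 2) (Fin 2) (ZMod 2) := !![1, 1; 1, 0]

def twoPowEquiv (m : ℕ) : Fin 2 × Fin (2 ^ m) ≃ Fin (2 ^ (m + 1)) :=
  finProdFinEquiv.trans (finCongr (by rw [pow_succ]; exact Nat.mul_comm 2 (2 ^ m)))

/-- The source polarization matrix `G_n = [[1,1],[1,0]]^{⊗ m}`, with `n = 2^m`. -/
def polarG : (m : ℕ) → Matrix (Fin (2 ^ m)) (Fin (2 ^ m)) (ZMod 2)
  | 0 => 1
  | m + 1 =>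
      Matrix.reindex (twoPowEquiv m) (twoPowEquiv m)
        (Matrix.kroneckerMap (· * ·) g2 (polarG m))

/-- The distribution of `n` i.i.d. copies of a source. -/
def iid {Ω : Type*} [Fintype Ω] (μ : Ω → ℝ) (n : ℕ) : (Fin n → Ω) → ℝ :=
  fun ω => ∏ i, μ (ω i)

/-- The polar transform `U^n = X^n G_n` of the `n` i.i.d. copies of `X`. -/
def polarVec {Ω : Type*} (X : Ω → ZMod 2) (m : ℕ) (ω : Fin (2 ^ m) → Ω) :
    Fin (2 ^ m) → ZMod 2 :=
  Matrix.vecMul (fun i => X (ω i)) (polarG m)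

/-- The prefix `U^{1:j-1}` of the polar transform. -/
def prefixVec {Ω : Type*} (X : Ω → ZMod 2) (m : ℕ) (j : Fin (2 ^ m))
    (ω : Fin (2 ^ m) → Ω) : Fin j.1 → ZMod 2 :=
  fun i => polarVec X m ω (Fin.castLE j.2.le i)

/-- `H^{(n)}_{X|S} = { j : H(U(j) | U^{1:j-1}, S^n) ≥ 1 - δ_n }`, where `n = 2^m`. -/
def highSet {Ω σ : Type*} [Fintype Ω] [Fintype σ] (μ : Ω → ℝ) (X : Ω → ZMod 2)
    (S : Ω → σ) (β : ℝ) (m : ℕ) : Finset (Fin (2 ^ m)) :=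
  cfilter fun j =>
    1 - deltaN β (2 ^ m) ≤
      condEnt (iid μ (2 ^ m)) (fun ω => polarVec X m ω j)
        (fun ω => (prefixVec X m j ω, fun i => S (ω i)))

/-- `L^{(n)}_{X|S} = { j : H(U(j) | U^{1:j-1}, S^n) ≤ δ_n }`, where `n = 2^m`. -/
def lowSet {Ω σ : Type*} [Fintype Ω] [Fintype σ] (μ : Ω → ℝ) (X : Ω → ZMod 2)
    (S : Ω → σ) (β : ℝ) (m : ℕ) : Finset (Fin (2 ^ m)) :=
  cfilter fun j =>
    condEnt (iid μ (2 ^ m)) (fun ω => polarVec X m ω j)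
        (fun ω => (prefixVec X m j ω, fun i => S (ω i))) ≤
      deltaN β (2 ^ m)

/-- `H^{(n)}_{X} = { j : H(U(j) | U^{1:j-1}) ≥ 1 - δ_n }` (no side information). -/
def highSet0 {Ω : Type*} [Fintype Ω] (μ : Ω → ℝ) (X : Ω → ZMod 2)
    (β : ℝ) (m : ℕ) : Finset (Fin (2 ^ m)) :=
  cfilter fun j =>
    1 - deltaN β (2 ^ m) ≤
      condEnt (iid μ (2 ^ m)) (fun ω => polarVec X m ω j) (prefixVec X m j)

/-- `L^{(n)}_{X} = { j : H(U(j) | U^{1:j-1}) ≤ δ_n }` (no side information). -/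
def lowSet0 {Ω : Type*} [Fintype Ω] (μ : Ω → ℝ) (X : Ω → ZMod 2)
    (β : ℝ) (m : ℕ) : Finset (Fin (2 ^ m)) :=
  cfilter fun j =>
    condEnt (iid μ (2 ^ m)) (fun ω => polarVec X m ω j) (prefixVec X m j) ≤
      deltaN β (2 ^ m)

/-- The subvector `X[𝒜]`. -/
def restr {n : ℕ} {γ : Type*} (A : Finset (Fin n)) (v : Fin n → γ) :
    {j // j ∈ A} → γ :=
  fun j => v j.1

/-- The triple of secured subvectors
`(A[H^{(n)}_{V|Z}], T_{(k)}[H^{(n)}_{U_k|VZ}], T_{(k̄)}[H^{(n)}_{U_k̄|V U_k Z}])`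
extracted from given realizations of the three polar-transformed layers.
`Ua` plays the role of `U_k` and `Ub` that of `U_k̄`. -/
def secTriple {Ω 𝒵 : Type*} [Fintype Ω] [Fintype 𝒵]
    (μ : Ω → ℝ) (V Ua Ub : Ω → ZMod 2) (Z : Ω → 𝒵) (β : ℝ) (m : ℕ)
    (a ta tb : Fin (2 ^ m) → ZMod 2) :=
  (restr (highSet μ V Z β m) a,
   restr (highSet μ Ua (fun ω => (V ω, Z ω)) β m) ta,
   restr (highSet μ Ub (fun ω => (V ω, Ua ω, Z ω)) β m) tb)


open Real Finset
open scoped Classical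

section Probability

variable {Ω α β γ : Type*} [Fintype Ω] (μ : Ω → ℝ)

lemma probOf_eq_sum_ite (X : Ω → α) (x : α) :
    probOf μ X x = ∑ ω, if X ω = x then μ ω else 0 := by
  rw [probOf, prob, cfilter, sum_filter]

lemma probOf_nonneg (hμ : ∀ ω, 0 ≤ μ ω) (X : Ω → α) (x : α) : 0 ≤ probOf μ X x :=
  sum_nonneg fun ω _ => hμ ω

lemma sum_probOf [Fintype α] (hμ : IsPMF μ) (X : Ω → α) : ∑ x, probOf μ X x = 1 := by
  simp only [probOf_eq_sum_ite]
  rw [sum_comm]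
  simpa using hμ.2

lemma probOf_comp [Fintype α] (X : Ω → α) (g : α → γ) (z : γ) :
    probOf μ (fun ω => g (X ω)) z = ∑ x, if g x = z then probOf μ X x else 0 := by
  simp only [probOf_eq_sum_ite]
  calc _ = ∑ x, ∑ ω, if X ω = x then (if g x = z then μ ω else 0) else 0 := by
        rw [sum_comm]; simp
    _ = _ := sum_congr rfl fun x _ => by split_ifs <;> simp

lemma probOf_eq_sum_pair [Fintype α] [Fintype β] (X : Ω → α) (Y : Ω → β) (y : β) :
    probOf μ Y y = ∑ x, probOf μ (fun ω => (X ω, Y ω)) (x, y) := by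
  rw [show Y = fun ω => Prod.snd (X ω, Y ω) from rfl, probOf_comp, Fintype.sum_prod_type]
  simp

lemma probOf_pair_comp_right [Fintype α] [Fintype β] (X : Ω → α) (Y : Ω → β) (g : β → γ)
    (x : α) (w : γ) :
    probOf μ (fun ω => (X ω, g (Y ω))) (x, w) =
      ∑ y, if g y = w then probOf μ (fun ω => (X ω, Y ω)) (x, y) else 0 := by
  rw [show (fun ω => (X ω, g (Y ω))) = fun ω => Prod.map id g (X ω, Y ω) from rfl,
    probOf_comp, Fintype.sum_prod_type]
  simp [Prod.ext_iff, ite_and]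

lemma probOf_pair_le [Fintype α] [Fintype β] (hμ : ∀ ω, 0 ≤ μ ω) (X : Ω → α) (Y : Ω → β)
    (x : α) (y : β) :
    probOf μ (fun ω => (X ω, Y ω)) (x, y) ≤ probOf μ Y y := by
  calc _ ≤ ∑ x', probOf μ (fun ω => (X ω, Y ω)) (x', y) :=
        single_le_sum (fun x' _ => probOf_nonneg μ hμ _ (x', y)) (mem_univ x)
    _ = _ := (probOf_eq_sum_pair μ X Y y).symm

end Probability

section Entropy

variable {Ω α β γ τ : Type*} [Fintype Ω] [Fintype α] [Fintype β] [Fintype γ] [Fintype τ]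
  (μ : Ω → ℝ)

lemma ent_eq_sum_negMulLog (X : Ω → α) :
    ent μ X = (∑ x, negMulLog (probOf μ X x)) / log 2 := by
  rw [ent, sum_div, ← sum_neg_distrib]
  exact sum_congr rfl fun x _ => by simp only [logb, negMulLog]; ring

lemma ent_comp_of_injective (X : Ω → α) {g : α → γ} (hg : g.Injective) :
    ent μ (fun ω => g (X ω)) = ent μ X := by
  simp only [ent_eq_sum_negMulLog]
  congr 1
  refine (Fintype.sum_of_injective g hg _ _ (fun z hz => ?_) fun x => ?_).symm
  · rw [probOf_comp, sum_eq_zero fun x _ => if_neg fun h => hz ⟨x, h⟩, negMulLog_zero]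
  · simp [probOf_comp, hg.eq_iff]

lemma mutInfo_eq_ent_sub_condEnt (X : Ω → α) (Y : Ω → β) :
    mutInfo μ X Y = ent μ X - condEnt μ X Y := by
  rw [mutInfo, condEnt]
  ring

lemma condEnt_comp_left_of_injective (X : Ω → α) (W : Ω → β) {g : α → γ} (hg : g.Injective) :
    condEnt μ (fun ω => g (X ω)) W = condEnt μ X W := by
  rw [condEnt, condEnt, ← ent_comp_of_injective μ (fun ω => (X ω, W ω))
    (hg.prodMap Function.injective_id)]
  rfl

lemma condEnt_pair_eq_add (X : Ω → α) (Y : Ω → β) (W : Ω → γ) :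
    condEnt μ (fun ω => (X ω, Y ω)) W =
      condEnt μ X W + condEnt μ Y (fun ω => (X ω, W ω)) := by
  have h := ent_comp_of_injective μ (fun ω => ((X ω, Y ω), W ω))
    (g := fun p => (p.1.2, p.1.1, p.2)) (by rintro ⟨⟨_, _⟩, _⟩ ⟨⟨_, _⟩, _⟩ h; simp_all)
  simp only [condEnt] at h ⊢
  linarith

lemma condEnt_triple_eq_add (X : Ω → α) (Y : Ω → β) (W : Ω → γ) (T : Ω → τ) :
    condEnt μ (fun ω => (X ω, Y ω, W ω)) T =
      condEnt μ X T + condEnt μ Y (fun ω => (X ω, T ω)) +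
        condEnt μ W (fun ω => (Y ω, X ω, T ω)) := by
  rw [condEnt_pair_eq_add, condEnt_pair_eq_add, add_assoc]

lemma condEnt_eq_sum_mul_log_sub (X : Ω → α) (Y : Ω → β) :
    condEnt μ X Y = (∑ y, ∑ x, probOf μ (fun ω => (X ω, Y ω)) (x, y) *
      (log (probOf μ Y y) - log (probOf μ (fun ω => (X ω, Y ω)) (x, y)))) / log 2 := by
  rw [condEnt, ent_eq_sum_negMulLog, ent_eq_sum_negMulLog, ← sub_div, Fintype.sum_prod_type,
    sum_comm, ← sum_sub_distrib]
  congr 1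
  refine sum_congr rfl fun y _ => ?_
  have hmarg : negMulLog (probOf μ Y y) =
      ∑ x, -(probOf μ (fun ω => (X ω, Y ω)) (x, y) * log (probOf μ Y y)) := by
    rw [sum_neg_distrib, ← sum_mul, ← probOf_eq_sum_pair μ X Y y, negMulLog, neg_mul]
  rw [hmarg, ← sum_sub_distrib]
  exact sum_congr rfl fun x _ => by simp only [negMulLog]; ring

lemma mul_log_sub_log_nonneg {a b : ℝ} (ha : 0 ≤ a) (hab : a ≤ b) :
    0 ≤ a * (log b - log a) := by
  rcases ha.eq_or_lt with rfl | ha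
  · simp
  · exact mul_nonneg ha.le (sub_nonneg.2 (log_le_log ha hab))

lemma condEnt_nonneg (hμ : ∀ ω, 0 ≤ μ ω) (X : Ω → α) (Y : Ω → β) : 0 ≤ condEnt μ X Y := by
  rw [condEnt_eq_sum_mul_log_sub]
  exact div_nonneg (sum_nonneg fun y _ => sum_nonneg fun x _ => mul_log_sub_log_nonneg
    (probOf_nonneg μ hμ _ _) (probOf_pair_le μ hμ X Y x y)) (log_nonneg one_le_two)

lemma mul_log_sub_log_le {a b t : ℝ} (ha : 0 ≤ a) (hab : a ≤ b) (ht : 0 < t) :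
    a * (log b - log a) ≤ b * t - a - a * log t := by
  rcases ha.eq_or_lt with rfl | ha
  · simpa using mul_nonneg hab ht.le
  · have hb := ha.trans_le hab
    have h := log_le_sub_one_of_pos (show 0 < b * t / a by positivity)
    rw [log_div (by positivity) ha.ne', log_mul hb.ne' ht.ne'] at h
    have h' := mul_le_mul_of_nonneg_left h ha.le
    rw [mul_sub (a := a) (c := 1), mul_div_cancel₀ _ ha.ne', mul_one] at h'
    linarith

/-- The log-sum inequality. -/
lemma sum_mul_log_sub_log_le {ι : Type*} (s : Finset ι) {a b : ι → ℝ}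
    (ha : ∀ i ∈ s, 0 ≤ a i) (hab : ∀ i ∈ s, a i ≤ b i) :
    ∑ i ∈ s, a i * (log (b i) - log (a i)) ≤
      (∑ i ∈ s, a i) * (log (∑ i ∈ s, b i) - log (∑ i ∈ s, a i)) := by
  set A := ∑ i ∈ s, a i
  set B := ∑ i ∈ s, b i
  rcases (show 0 ≤ A from sum_nonneg ha).eq_or_lt with hA | hA
  · rw [← hA, zero_mul]
    refine (sum_eq_zero fun i hi => ?_).le
    rw [(sum_eq_zero_iff_of_nonneg ha).1 hA.symm i hi, zero_mul]
  · have hB : 0 < B := hA.trans_le (sum_le_sum hab)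
    calc _ ≤ ∑ i ∈ s, (b i * (A / B) - a i - a i * log (A / B)) :=
          sum_le_sum fun i hi => mul_log_sub_log_le (ha i hi) (hab i hi) (by positivity)
      _ = A * (log B - log A) := by
          rw [sum_sub_distrib, sum_sub_distrib, ← sum_mul, ← sum_mul, log_div hA.ne' hB.ne']
          field_simp
          ring

lemma ent_le_logb_card (hμ : IsPMF μ) (X : Ω → α) : ent μ X ≤ logb 2 (Fintype.card α) := by
  have hP0 := probOf_nonneg μ hμ.1 X
  have hP1 := sum_probOf μ hμ X
  rw [ent_eq_sum_negMulLog, logb]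
  refine div_le_div_of_nonneg_right ?_ (log_nonneg one_le_two)
  calc ∑ x, negMulLog (probOf μ X x) = ∑ x, probOf μ X x * (log 1 - log (probOf μ X x)) :=
        sum_congr rfl fun x _ => by simp [negMulLog]
    _ ≤ (∑ x, probOf μ X x) * (log (∑ _x : α, (1 : ℝ)) - log (∑ x, probOf μ X x)) :=
        sum_mul_log_sub_log_le _ (fun x _ => hP0 x)
          fun x _ => hP1 ▸ single_le_sum (fun x _ => hP0 x) (mem_univ x)
    _ = log (Fintype.card α) := by simp [hP1]

lemma condEnt_le_condEnt_comp (hμ : ∀ ω, 0 ≤ μ ω) (X : Ω → α) (Y : Ω → β) (g : β → γ) :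
    condEnt μ X Y ≤ condEnt μ X (fun ω => g (Y ω)) := by
  rw [condEnt_eq_sum_mul_log_sub, condEnt_eq_sum_mul_log_sub, sum_comm, sum_comm (γ := γ)]
  refine div_le_div_of_nonneg_right (sum_le_sum fun x _ => ?_) (log_nonneg one_le_two)
  rw [← sum_fiberwise univ g]
  refine sum_le_sum fun w _ => ?_
  rw [probOf_pair_comp_right, probOf_comp, ← sum_filter, ← sum_filter]
  exact sum_mul_log_sub_log_le _ (fun y _ => probOf_nonneg μ hμ _ _)
    fun y _ => probOf_pair_le μ hμ X Y x y

lemma ent_le_card_add_card_add_card (hμ : IsPMF μ) {ι : Type*} [DecidableEq ι]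
    {F G B : Finset ι} (X : Ω → (F → ZMod 2) × (G → ZMod 2) × (B → ZMod 2)) :
    ent μ X ≤ #F + #G + #B := by
  refine (ent_le_logb_card μ hμ X).trans_eq ?_
  simp only [Fintype.card_prod, Fintype.card_fun, ZMod.card, Fintype.card_coe, ← pow_add]
  push_cast
  rw [logb_pow, logb_self_eq_one one_lt_two]
  push_cast
  ring

end Entropy

section Polar

variable {Ω σ τ γ : Type*} [Fintype Ω] [Fintype σ] [Fintype τ] [Fintype γ]

lemma iid_nonneg {μ : Ω → ℝ} (hμ : ∀ ω, 0 ≤ μ ω) (n : ℕ) (ω : Fin n → Ω) : 0 ≤ iid μ n ω :=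
  prod_nonneg fun i _ => hμ (ω i)

lemma restr_insert_injective {γ : Type*} {n : ℕ} {a : Fin n} {F : Finset (Fin n)} :
    Function.Injective fun v : {j // j ∈ insert a F} → γ =>
      (fun j : {j // j ∈ F} => v ⟨j, mem_insert_of_mem j.2⟩, v ⟨a, mem_insert_self a F⟩) := by
  intro v w h
  simp only [Prod.mk.injEq, funext_iff] at h
  funext ⟨j, hj⟩
  rcases mem_insert.1 hj with rfl | hj
  · exact h.2
  · exact h.1 ⟨j, hj⟩

lemma sum_condEnt_prefix_le_condEnt_restr (ν : Ω → ℝ) (hν : ∀ ω, 0 ≤ ν ω) {n : ℕ}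
    (A : Ω → Fin n → γ) (S : Ω → σ) (f : σ → τ) (F : Finset (Fin n)) :
    ∑ j ∈ F, condEnt ν (fun ω => A ω j)
        (fun ω => (fun i : Fin j => A ω (Fin.castLE j.2.le i), S ω)) ≤
      condEnt ν (fun ω => restr F (A ω)) (fun ω => f (S ω)) := by
  induction F using Finset.induction_on_max with
  | empty => simpa using condEnt_nonneg ν hν _ _
  | insert a F hlt ih =>
    have hstep := condEnt_le_condEnt_comp ν hν (fun ω => A ω a)
      (fun ω => (fun i : Fin a => A ω (Fin.castLE a.2.le i), S ω))
      fun p => (fun j : {j // j ∈ F} => p.1 ⟨j.1, hlt j.1 j.2⟩, f p.2)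
    calc _ ≤ condEnt ν (fun ω => restr F (A ω)) (fun ω => f (S ω)) +
          condEnt ν (fun ω => A ω a) (fun ω => (restr F (A ω), f (S ω))) := by
          rw [sum_insert fun h => lt_irrefl a (hlt a h), add_comm]
          exact add_le_add ih hstep
      _ = condEnt ν (fun ω => (restr F (A ω), A ω a)) (fun ω => f (S ω)) :=
          (condEnt_pair_eq_add ν _ _ _).symm
      _ = _ := (condEnt_comp_left_of_injective ν (fun ω => restr (insert a F) (A ω))
          (fun ω => f (S ω)) restr_insert_injective :)

lemma mem_highSet {μ : Ω → ℝ} {X : Ω → ZMod 2} {S : Ω → σ} {β : ℝ} {m : ℕ} {j : Fin (2 ^ m)} :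
    j ∈ highSet μ X S β m ↔ 1 - deltaN β (2 ^ m) ≤ condEnt (iid μ (2 ^ m))
      (fun ω => polarVec X m ω j) (fun ω => (prefixVec X m j ω, fun i => S (ω i))) := by
  simp only [highSet, cfilter, mem_filter, mem_univ, true_and]

lemma card_highSet_mul_le_condEnt_restr (μ : Ω → ℝ) (hμ : ∀ ω, 0 ≤ μ ω) (X : Ω → ZMod 2)
    (S : Ω → σ) (β : ℝ) (m : ℕ) (f : (Fin (2 ^ m) → σ) → τ) :
    (#(highSet μ X S β m) : ℝ) * (1 - deltaN β (2 ^ m)) ≤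
      condEnt (iid μ (2 ^ m)) (fun ω => restr (highSet μ X S β m) (polarVec X m ω))
        (fun ω => f fun i => S (ω i)) := by
  refine le_trans ?_ (sum_condEnt_prefix_le_condEnt_restr _ (iid_nonneg hμ _)
    (polarVec X m) (fun ω i => S (ω i)) f _)
  rw [← nsmul_eq_mul]
  exact card_nsmul_le_sum _ _ _ fun j hj => (mem_highSet.1 hj)

end Polar

theorem per_block_strong_secrecy_conditional_general
    {Ω 𝒵 : Type*} [Fintype Ω] [Fintype 𝒵]
    (μ : Ω → ℝ) (hμ : IsPMF μ)
    (V Ua Ub : Ω → ZMod 2) (Z : Ω → 𝒵)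
    (β : ℝ) (m : ℕ)
    (q : (Fin (2 ^ m) → ZMod 2) × (Fin (2 ^ m) → ZMod 2) × (Fin (2 ^ m) → ZMod 2) ×
      (Fin (2 ^ m) → 𝒵) → ℝ)
    (hq : IsPMF q) (ε : ℝ)
    (hH : condEnt (iid μ (2 ^ m))
        (fun ω => secTriple μ V Ua Ub Z β m
          (polarVec V m ω) (polarVec Ua m ω) (polarVec Ub m ω))
        (fun ω => fun i => Z (ω i)) - ε ≤
      condEnt q
        (fun s => secTriple μ V Ua Ub Z β m s.1 s.2.1 s.2.2.1)
        (fun s => s.2.2.2)) :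
    mutInfo q (fun s => secTriple μ V Ua Ub Z β m s.1 s.2.1 s.2.2.1)
        (fun s => s.2.2.2) ≤
      3 * ((2 : ℕ) ^ m : ℝ) * deltaN β (2 ^ m) + ε := by
  set δ := deltaN β (2 ^ m)
  set F := highSet μ V Z β m
  set G := highSet μ Ua (fun ω => (V ω, Z ω)) β m
  set B := highSet μ Ub (fun ω => (V ω, Ua ω, Z ω)) β m
  have hp : (#F + #G + #B : ℝ) * (1 - δ) ≤ condEnt (iid μ (2 ^ m))
      (fun ω => secTriple μ V Ua Ub Z β m (polarVec V m ω) (polarVec Ua m ω) (polarVec Ub m ω))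
      (fun ω i => Z (ω i)) := by
    -- each block of the triple is conditioned on the earlier blocks and `Zⁿ`, all of which are
    -- functions of the i.i.d. side information defining that block's high-entropy set
    have hF := card_highSet_mul_le_condEnt_restr μ hμ.1 V Z β m fun s => s
    have hG := card_highSet_mul_le_condEnt_restr μ hμ.1 Ua (fun ω => (V ω, Z ω)) β m
      fun s => (restr F (Matrix.vecMul (fun i => (s i).1) (polarG m)), fun i => (s i).2)
    have hB := card_highSet_mul_le_condEnt_restr μ hμ.1 Ub (fun ω => (V ω, Ua ω, Z ω)) β m
      fun s => (restr G (Matrix.vecMul (fun i => (s i).2.1) (polarG m)),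
        restr F (Matrix.vecMul (fun i => (s i).1) (polarG m)), fun i => (s i).2.2)
    refine le_trans (le_of_eq ?_)
      ((add_le_add (add_le_add hF hG) hB).trans_eq (condEnt_triple_eq_add _ _ _ _ _).symm)
    ring
  have hq_ent : ent q (fun s => secTriple μ V Ua Ub Z β m s.1 s.2.1 s.2.2.1) ≤ #F + #G + #B :=
    ent_le_card_add_card_add_card q hq _
  have hcard : (#F + #G + #B : ℝ) ≤ 3 * 2 ^ m := by
    have hF := card_le_univ F
    have hG := card_le_univ G
    have hB := card_le_univ B
    simp only [Fintype.card_fin] at hF hG hB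
    exact_mod_cast (by omega : #F + #G + #B ≤ 3 * 2 ^ m)
  have hδ : 0 ≤ δ := rpow_nonneg zero_le_two _
  rw [mutInfo_eq_ent_sub_condEnt]
  push_cast
  linarith [mul_le_mul_of_nonneg_right hcard hδ]

/-- **Per-block strong secrecy, conditional form (Lemma 2 skeleton).**
If a tuple `(Ã^n, T̃_{(1)}^n, T̃_{(2)}^n, Z̃^n)` with law `q̃` satisfies
`H_q̃(Ã[ℱ], T̃_{(k)}[𝒢], T̃_{(k̄)}[ℬ] | Z̃^n) ≥ H_p(A[ℱ], T_{(k)}[𝒢], T_{(k̄)}[ℬ] | Z^n) − ε`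
(the right-hand side computed under the true i.i.d. law `p`), then
`I_q̃(Ã[ℱ], T̃_{(k)}[𝒢], T̃_{(k̄)}[ℬ] ; Z̃^n) ≤ 3 n δ_n + ε`.
Here `Ua` plays the role of `U_k` and `Ub` that of `U_k̄`. -/
theorem per_block_strong_secrecy_conditional
    {Ω 𝒵 : Type*} [Fintype Ω] [Fintype 𝒵]
    (μ : Ω → ℝ) (hμ : IsPMF μ)
    (V Ua Ub : Ω → ZMod 2) (Z : Ω → 𝒵)
    (β : ℝ) (hβ0 : 0 < β) (hβ1 : β < 1 / 2) (m : ℕ)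
    (q : (Fin (2 ^ m) → ZMod 2) × (Fin (2 ^ m) → ZMod 2) × (Fin (2 ^ m) → ZMod 2) ×
      (Fin (2 ^ m) → 𝒵) → ℝ)
    (hq : IsPMF q) (ε : ℝ) (hε : 0 ≤ ε)
    (hH : condEnt (iid μ (2 ^ m))
        (fun ω => secTriple μ V Ua Ub Z β m
          (polarVec V m ω) (polarVec Ua m ω) (polarVec Ub m ω))
        (fun ω => fun i => Z (ω i)) - ε ≤
      condEnt q
        (fun s => secTriple μ V Ua Ub Z β m s.1 s.2.1 s.2.2.1)
        (fun s => s.2.2.2)) :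
    mutInfo q (fun s => secTriple μ V Ua Ub Z β m s.1 s.2.1 s.2.2.1)
        (fun s => s.2.2.2) ≤
      3 * ((2 : ℕ) ^ m : ℝ) * deltaN β (2 ^ m) + ε :=
  per_block_strong_secrecy_conditional_general μ hμ V Ua Ub Z β m q hq ε hH

end WTpaper
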